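/- Let N ≥ 1 and let x, y : Fin N → EuclideanSpace ℝ (Fin 3) be two point clouds. If PM(x,y) > 2·√2 then RMSD(x,y) > 2. -/

import Mathlib

/-!
Since `|‖a‖ - ‖b‖| ≤ ‖a - b‖`, each term of `PM²` is at most `‖vᵢ - vⱼ‖²` with `v = x - y`, and
`∑ᵢ ∑ⱼ ‖vᵢ - vⱼ‖² = 2N ∑ᵢ ‖vᵢ‖² - 2‖∑ᵢ vᵢ‖²`. Hence `PM² ≤ 2 RMSD²`, i.e. `PM ≤ √2 · RMSD`.
-/

open Finset

section PointClouds

variable {ι : Type*} [Fintype ι]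

theorem sq_norm_sub_norm_le {E : Type*} [SeminormedAddCommGroup E] (a b : E) :
    (‖a‖ - ‖b‖) ^ 2 ≤ ‖a - b‖ ^ 2 :=
  sq_abs (‖a‖ - ‖b‖) ▸ pow_le_pow_left₀ (abs_nonneg _) (abs_norm_sub_norm_le a b) 2

variable {E : Type*} [NormedAddCommGroup E] [InnerProductSpace ℝ E]

theorem sum_sum_norm_sub_sq (v : ι → E) :
    ∑ i, ∑ j, ‖v i - v j‖ ^ 2 =
      2 * Fintype.card ι * ∑ i, ‖v i‖ ^ 2 - 2 * ‖∑ i, v i‖ ^ 2 := by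
  have hinner : ∑ i, ∑ j, inner ℝ (v i) (v j) = ‖∑ i, v i‖ ^ 2 := by
    rw [← real_inner_self_eq_norm_sq, sum_inner]
    simp only [inner_sum]
  simp only [norm_sub_sq_real, sum_add_distrib, sum_sub_distrib, sum_const, card_univ,
    nsmul_eq_mul, ← mul_sum, hinner]
  ring

theorem sum_sum_sq_norm_sub_norm_le (x y : ι → E) :
    ∑ i, ∑ j, (‖x i - x j‖ - ‖y i - y j‖) ^ 2 ≤
      2 * Fintype.card ι * ∑ i, ‖x i - y i‖ ^ 2 :=
  calc ∑ i, ∑ j, (‖x i - x j‖ - ‖y i - y j‖) ^ 2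
      ≤ ∑ i, ∑ j, ‖(x i - y i) - (x j - y j)‖ ^ 2 :=
        sum_le_sum fun i _ => sum_le_sum fun j _ =>
          sub_sub_sub_comm (x i) (x j) (y i) (y j) ▸ sq_norm_sub_norm_le _ _
    _ = 2 * Fintype.card ι * ∑ i, ‖x i - y i‖ ^ 2 - 2 * ‖∑ i, (x i - y i)‖ ^ 2 :=
        sum_sum_norm_sub_sq fun i => x i - y i
    _ ≤ 2 * Fintype.card ι * ∑ i, ‖x i - y i‖ ^ 2 := by
        linarith [sq_nonneg ‖∑ i, (x i - y i)‖]

noncomputable def packingMatchingSq (x y : ι → E) : ℝ :=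
  (1 / (Fintype.card ι : ℝ) ^ 2) * ∑ i, ∑ j, (‖x i - x j‖ - ‖y i - y j‖) ^ 2

noncomputable def rmsdSq (x y : ι → E) : ℝ :=
  (1 / (Fintype.card ι : ℝ)) * ∑ i, ‖x i - y i‖ ^ 2

theorem packingMatchingSq_le_two_mul_rmsdSq (x y : ι → E) :
    packingMatchingSq x y ≤ 2 * rmsdSq x y := by
  rcases (Fintype.card ι).eq_zero_or_pos with hcard | hcard
  · simp [packingMatchingSq, rmsdSq, hcard]
  calc packingMatchingSq x y
      ≤ (1 / (Fintype.card ι : ℝ) ^ 2) * (2 * Fintype.card ι * ∑ i, ‖x i - y i‖ ^ 2) := by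
        unfold packingMatchingSq
        gcongr
        exact sum_sum_sq_norm_sub_norm_le x y
    _ = 2 * rmsdSq x y := by
        unfold rmsdSq
        field_simp

end PointClouds

theorem rmsd_gt_two_of_pm_gt_general (N : ℕ)
    (x y : Fin N → EuclideanSpace ℝ (Fin 3))
    (h : Real.sqrt ((1 / (N : ℝ) ^ 2) *
        ∑ i, ∑ j, (‖x i - x j‖ - ‖y i - y j‖) ^ 2) > 2 * Real.sqrt 2) :
    Real.sqrt ((1 / (N : ℝ)) * ∑ i, ‖x i - y i‖ ^ 2) > 2 := by
  have key := packingMatchingSq_le_two_mul_rmsdSq x y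
  simp only [packingMatchingSq, rmsdSq, Fintype.card_fin] at key
  rw [gt_iff_lt, Real.lt_sqrt (by positivity)] at h ⊢
  rw [mul_pow, Real.sq_sqrt zero_le_two] at h
  linarith

/-- For point clouds `x, y : Fin N → EuclideanSpace ℝ (Fin 3)` with `N ≥ 1`,
if `PM(x,y) > 2·√2` then `RMSD(x,y) > 2`. -/
theorem rmsd_gt_two_of_pm_gt (N : ℕ) (hN : 1 ≤ N)
    (x y : Fin N → EuclideanSpace ℝ (Fin 3))
    (h : Real.sqrt ((1 / (N : ℝ) ^ 2) *
        ∑ i, ∑ j, (‖x i - x j‖ - ‖y i - y j‖) ^ 2) > 2 * Real.sqrt 2) :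
    Real.sqrt ((1 / (N : ℝ)) * ∑ i, ‖x i - y i‖ ^ 2) > 2 :=
  rmsd_gt_two_of_pm_gt_general N x y h
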